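/- arXiv:0710.1797 — 2 statements merged into one kernel-verified Lean document; each statement's English description precedes it below -/
import Mathlib

section
/- Let n = qt + r with r dividing t, and define g_i as in the case r | t: g_i = {x ∈ {1,...,n} : x ≡ i (mod t)} ∪ {x : x > n-r, x ≡ i (mod r)}. If I ⊆ {1,...,t} contains two distinct elements a, b with a ≡ b (mod r), letting i and j be the least and greatest elements of I congruent to a modulo r, the set g = Δ_{s∈I} g_s contains both i and (q-1)t + j, and (n + i) − ((q−1)t + j) ≤ t. -/
open Finset
open scoped symmDiff Classical

/-- The cyclic block of length `t` modulo `n` starting at `a`, i.e. `{a+1,...,a+t}`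
reduced modulo `n` into `{1,...,n}`. -/
def cyclicBlock (n t a : ℕ) : Finset ℕ :=
  (Finset.range t).image (fun j => (a + j) % n + 1)

instance : Std.Commutative (α := Finset ℕ) (· ∆ ·) := ⟨symmDiff_comm⟩
instance : Std.Associative (α := Finset ℕ) (· ∆ ·) := ⟨symmDiff_assoc⟩

/-- Iterated symmetric difference `∆_{i ∈ I} g i`. -/
def symmDiffs (I : Finset ℕ) (g : ℕ → Finset ℕ) : Finset ℕ :=
  I.fold (· ∆ ·) ∅ g

/-!
Below the last `r` points, `x ∈ g s` just says `x ≡ s (mod t)`, and distinct elements of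
`I ⊆ {1, …, t}` are incongruent modulo `t`. So `i` and `(q - 1) t + j` lie in exactly one of
the sets `g s` with `s ∈ I` (namely `g i`, resp. `g j`), hence in their symmetric difference.
The inequality says `i + r ≤ j`, which holds because `i < j` are congruent modulo `r`.
-/

lemma mem_symmDiffs_iff_odd_card {I : Finset ℕ} {g : ℕ → Finset ℕ} {x : ℕ} :
    x ∈ symmDiffs I g ↔ Odd #{s ∈ I | x ∈ g s} := by
  induction I using Finset.induction with
  | empty => simp [symmDiffs]
  | @insert c I hc ih =>
    have hfold : symmDiffs (insert c I) g = g c ∆ symmDiffs I g := Finset.fold_insert hc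
    rw [hfold, Finset.mem_symmDiff, ih, Finset.filter_insert]
    by_cases hx : x ∈ g c
    · have hcf : c ∉ {s ∈ I | x ∈ g s} := fun h => hc (Finset.mem_of_mem_filter _ h)
      rw [if_pos hx, Finset.card_insert_of_notMem hcf, Nat.odd_add_one]
      tauto
    · rw [if_neg hx]
      tauto

lemma mem_symmDiffs_of_unique {I : Finset ℕ} {g : ℕ → Finset ℕ} {x s : ℕ} (hs : s ∈ I)
    (hx : x ∈ g s) (huniq : ∀ s' ∈ I, x ∈ g s' → s' = s) : x ∈ symmDiffs I g := by
  have hfilter : {s' ∈ I | x ∈ g s'} = {s} :=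
    Finset.eq_singleton_iff_unique_mem.mpr
      ⟨Finset.mem_filter.mpr ⟨hs, hx⟩, fun s' hs' => huniq s' (Finset.mem_filter.mp hs').1
        (Finset.mem_filter.mp hs').2⟩
  rw [mem_symmDiffs_iff_odd_card, hfilter, Finset.card_singleton]
  exact odd_one

lemma Nat.ModEq.eq_of_mem_Icc_one {t s s' : ℕ} (h : s ≡ s' [MOD t]) (hs : s ∈ Icc 1 t)
    (hs' : s' ∈ Icc 1 t) : s = s' := by
  rw [Finset.mem_Icc] at hs hs'
  exact h.eq_of_abs_lt (abs_sub_lt_iff.mpr ⟨by omega, by omega⟩)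

lemma Nat.add_le_of_modEq_of_lt {r i j : ℕ} (h : i ≡ j [MOD r]) (hij : i < j) : r + i ≤ j := by
  have := Nat.le_of_dvd (Nat.sub_pos_of_lt hij) ((Nat.modEq_iff_dvd' hij.le).mp h)
  omega

lemma mem_symmDiffs_of_le_sub {n t r : ℕ} {g : ℕ → Finset ℕ}
    (hg : ∀ s, g s = (Icc 1 n).filter
      (fun x => x % t = s % t ∨ (n - r < x ∧ x % r = s % r)))
    {I : Finset ℕ} (hI : I ⊆ Icc 1 t) {x s : ℕ} (hs : s ∈ I) (hx : x % t = s % t)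
    (hx1 : 1 ≤ x) (hxn : x ≤ n - r) : x ∈ symmDiffs I g := by
  refine mem_symmDiffs_of_unique hs ?_ fun s' hs' hxs' => ?_
  · rw [hg, Finset.mem_filter, Finset.mem_Icc]
    exact ⟨⟨hx1, by omega⟩, Or.inl hx⟩
  · rw [hg, Finset.mem_filter] at hxs'
    obtain ⟨-, hxs' | hxs'⟩ := hxs'
    · exact Nat.ModEq.eq_of_mem_Icc_one (hxs'.symm.trans hx) (hI hs') (hI hs)
    · omega

theorem stmt14_general (n q t r : ℕ) (hq : 0 < q) (hn : n = q * t + r)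
    (g : ℕ → Finset ℕ)
    (hg : ∀ s, g s = (Finset.Icc 1 n).filter
      (fun x => x % t = s % t ∨ (n - r < x ∧ x % r = s % r)))
    (I : Finset ℕ) (hI : I ⊆ Finset.Icc 1 t)
    (a b : ℕ) (ha : a ∈ I) (hb : b ∈ I) (hab : a ≠ b) (hmod : a % r = b % r)
    (i j : ℕ) (hiI : i ∈ I) (hjI : j ∈ I) (hi : i % r = a % r) (hj : j % r = a % r)
    (hmin : ∀ x ∈ I, x % r = a % r → i ≤ x)
    (hmax : ∀ x ∈ I, x % r = a % r → x ≤ j) :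
    i ∈ symmDiffs I g ∧ (q - 1) * t + j ∈ symmDiffs I g ∧
      (n + i) - ((q - 1) * t + j) ≤ t := by
  have hi1 := Finset.mem_Icc.mp (hI hiI)
  have hj1 := Finset.mem_Icc.mp (hI hjI)
  have hnr : n - r = (q - 1) * t + t := by
    rw [hn, Nat.add_sub_cancel, ← add_one_mul, Nat.sub_one_add_one hq.ne']
  have hij : i < j := by
    have := hmin a ha rfl
    have := hmin b hb hmod.symm
    have := hmax a ha rfl
    have := hmax b hb hmod.symm
    omega
  have hrij : r + i ≤ j := Nat.add_le_of_modEq_of_lt (hi.trans hj.symm) hij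
  refine ⟨mem_symmDiffs_of_le_sub hg hI hiI rfl hi1.1 (by omega),
    mem_symmDiffs_of_le_sub hg hI hjI (by simp) (by omega) (by omega), by omega⟩

theorem stmt14 (n q t r : ℕ) (hq : 0 < q) (ht : 0 < t) (hr : 0 < r)
    (hrt : r ∣ t) (hrlt : r < t) (hn : n = q * t + r)
    (g : ℕ → Finset ℕ)
    (hg : ∀ s, g s = (Finset.Icc 1 n).filter
      (fun x => x % t = s % t ∨ (n - r < x ∧ x % r = s % r)))
    (I : Finset ℕ) (hI : I ⊆ Finset.Icc 1 t)
    (a b : ℕ) (ha : a ∈ I) (hb : b ∈ I) (hab : a ≠ b) (hmod : a % r = b % r)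
    (i j : ℕ) (hiI : i ∈ I) (hjI : j ∈ I) (hi : i % r = a % r) (hj : j % r = a % r)
    (hmin : ∀ x ∈ I, x % r = a % r → i ≤ x)
    (hmax : ∀ x ∈ I, x % r = a % r → x ≤ j) :
    i ∈ symmDiffs I g ∧ (q - 1) * t + j ∈ symmDiffs I g ∧
      (n + i) - ((q - 1) * t + j) ≤ t :=
  stmt14_general n q t r hq hn g hg I hI a b ha hb hab hmod i j hiI hjI hi hj hmin hmax
end

section
/- Let n ≥ t ≥ 1 and let G_{n,t} be the subgroup of (𝒫({1,...,n}), Δ) generated by the sets g_1,...,g_t from the Euclidean algorithm construction. Then every nonempty element of G_{n,t} intersects every cyclic translate modulo n of {1,...,t}. -/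
open Finset
open scoped symmDiff Classical

/-- The least strictly positive residue of `y` modulo `z`. -/
def lpr (y z : ℕ) : ℕ := if y % z = 0 then z else y % z

/-!
Inside `[1, n]` each generator `g_i` is a chain of points running from `i` up to a point
`≥ n - t + i`, consecutive points at distance at most `t`; hence it meets every cyclic
translate of `{1, …, t}`. Moreover, if `g_i` and `g_{i'}` with `i < i'` share a point `x ≤ n`,
then `g_{i'}` has a point `y < x` with `y ≥ n - t + i`. Given a translate `B`, let `x` be the
least point of `B` covered by the generators indexed by `I`. If it were covered twice, the
point `y` would lie below `B`, so `B` would wrap around and contain `i`; but `i ∈ g_i` and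
`i < x`. So `x` is covered exactly once and lies in the symmetric difference.
-/

lemma lpr_pos {y : ℕ} (z : ℕ) (hy : 0 < y) : 0 < lpr y z := by
  unfold lpr
  split_ifs with h
  · rcases Nat.eq_zero_or_pos z with rfl | hz
    · simp at h; omega
    · exact hz
  · exact Nat.pos_of_ne_zero h

lemma lpr_le {y : ℕ} (z : ℕ) (hy : 0 < y) : lpr y z ≤ y := by
  unfold lpr
  split_ifs with h
  · rcases Nat.eq_zero_or_pos z with rfl | hz
    · simp at h; omega
    · exact Nat.le_of_dvd hy (Nat.dvd_of_mod_eq_zero h)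
  · exact Nat.mod_le y z

lemma lpr_le_right (y : ℕ) {z : ℕ} (hz : 0 < z) : lpr y z ≤ z := by
  unfold lpr
  split_ifs
  exacts [le_rfl, (Nat.mod_lt y hz).le]

lemma exists_eq_lpr_add_mul {y : ℕ} (z : ℕ) (hy : 0 < y) : ∃ m, y = lpr y z + m * z := by
  unfold lpr
  split_ifs with h
  · obtain ⟨c, rfl⟩ := Nat.dvd_of_mod_eq_zero h
    obtain ⟨m, rfl⟩ : ∃ m, c = m + 1 := ⟨c - 1, by rcases c with _ | c <;> simp_all⟩
    exact ⟨m, by ring⟩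
  · exact ⟨y / z, by rw [mul_comm, Nat.mod_add_div]⟩

lemma mem_symmDiffs (I : Finset ℕ) (g : ℕ → Finset ℕ) (x : ℕ) :
    x ∈ symmDiffs I g ↔ Odd #{i ∈ I | x ∈ g i} := by
  induction I using Finset.induction_on with
  | empty => simp [symmDiffs]
  | @insert a s ha ih =>
    rw [symmDiffs, fold_insert ha, ← symmDiffs, mem_symmDiff, filter_insert]
    by_cases hx : x ∈ g a
    · rw [if_pos hx, card_insert_of_notMem (fun h => ha (mem_filter.1 h).1), Nat.odd_add_one,
        ← ih]
      tauto
    · rw [if_neg hx, ← ih]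
      tauto

lemma mem_cyclicBlock {n t c v : ℕ} (hc : c < n) (htn : t ≤ n) :
    v ∈ cyclicBlock n t c ↔ (c < v ∧ v ≤ c + t ∧ v ≤ n) ∨ (0 < v ∧ v + n ≤ c + t) := by
  simp only [cyclicBlock, mem_image, mem_range]
  constructor
  · rintro ⟨j, hj, rfl⟩
    rcases Nat.lt_or_ge (c + j) n with h | h
    · rw [Nat.mod_eq_of_lt h]
      omega
    · rw [Nat.mod_eq_sub_mod h, Nat.mod_eq_of_lt (by omega)]
      omega
  · rintro (⟨h1, h2, h3⟩ | ⟨h1, h2⟩)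
    · refine ⟨v - 1 - c, by omega, ?_⟩
      rw [show c + (v - 1 - c) = v - 1 by omega, Nat.mod_eq_of_lt (by omega)]
      omega
    · refine ⟨v - 1 + n - c, by omega, ?_⟩
      rw [show c + (v - 1 + n - c) = v - 1 + n by omega, Nat.add_mod_right,
        Nat.mod_eq_of_lt (by omega)]
      omega

lemma mem_cyclicBlock_of_notMem_of_lt {n t c x y a : ℕ} (hc : c < n) (htn : t ≤ n)
    (hx : x ∈ cyclicBlock n t c) (hy : y ∉ cyclicBlock n t c) (hyx : y < x)
    (ha : 0 < a) (hay : n + a ≤ y + t) : a ∈ cyclicBlock n t c ∧ a < x := by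
  rw [mem_cyclicBlock hc htn] at hx hy ⊢
  omega

lemma inter_cyclicBlock_nonempty {n t c i : ℕ} {s : Finset ℕ} (hc : c < n) (htn : t ≤ n)
    (hi : i ∈ s) (hi0 : 0 < i)
    (htop : ∃ y ∈ s, y ≤ n ∧ n + i ≤ y + t)
    (hgap : ∀ y ∈ s, y ≤ n → t < y → ∃ p ∈ s, p < y ∧ y ≤ p + t) :
    (s ∩ cyclicBlock n t c).Nonempty := by
  obtain ⟨y, hys, hyn, hyt⟩ := htop
  by_cases hwrap : n < c + t
  · by_cases hil : i + n ≤ c + t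
    · exact ⟨i, mem_inter.2 ⟨hi, (mem_cyclicBlock hc htn).2 (Or.inr ⟨hi0, hil⟩)⟩⟩
    · exact ⟨y, mem_inter.2 ⟨hys, (mem_cyclicBlock hc htn).2 (Or.inl ⟨by omega, by omega, hyn⟩)⟩⟩
  -- walk down from `y` with steps of length at most `t` until the window `(c, c + t]` is hit
  have hwalk : ∀ z ∈ s, c < z → z ≤ n → ∃ w ∈ s, c < w ∧ w ≤ c + t ∧ w ≤ n := by
    intro z
    induction z using Nat.strong_induction_on with
    | _ z ih =>
      intro hz hcz hzn
      by_cases hzt : z ≤ c + t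
      · exact ⟨z, hz, hcz, hzt, hzn⟩
      obtain ⟨p, hp, hpz, hzp⟩ := hgap z hz hzn (by omega)
      exact ih p hpz hp (by omega) (by omega)
  obtain ⟨w, hw, hcw, hwt, hwn⟩ := hwalk y hys (by omega) hyn
  exact ⟨w, mem_inter.2 ⟨hw, (mem_cyclicBlock hc htn).2 (Or.inl ⟨hcw, hwt, hwn⟩)⟩⟩

lemma symmDiffs_inter_cyclicBlock_nonempty {n t c : ℕ} {I : Finset ℕ} {g : ℕ → Finset ℕ}
    (hc : c < n) (htn : t ≤ n) (hI : I.Nonempty) (hI0 : ∀ i ∈ I, 0 < i)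
    (hself : ∀ i ∈ I, i ∈ g i) (hmeet : ∀ i ∈ I, (g i ∩ cyclicBlock n t c).Nonempty)
    (hcoll : ∀ i ∈ I, ∀ i' ∈ I, i < i' → ∀ x ∈ g i, x ∈ g i' → x ≤ n →
      ∃ y ∈ g i', n + i ≤ y + t ∧ y < x) :
    (symmDiffs I g ∩ cyclicBlock n t c).Nonempty := by
  set B := cyclicBlock n t c
  set V := B.filter fun x => ∃ i ∈ I, x ∈ g i
  have hV : V.Nonempty := by
    obtain ⟨i, hi⟩ := hI
    obtain ⟨x, hx⟩ := hmeet i hi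
    exact ⟨x, mem_filter.2 ⟨(mem_inter.1 hx).2, i, hi, (mem_inter.1 hx).1⟩⟩
  obtain ⟨x, hxV, hmin⟩ := V.exists_min_image id hV
  obtain ⟨hxB, i₀, hi₀, hxi₀⟩ := mem_filter.1 hxV
  have hxn : x ≤ n := by
    rw [mem_cyclicBlock hc htn] at hxB
    omega
  have hcovered : ∀ i ∈ I, ∀ i' ∈ I, i < i' → x ∈ g i → x ∈ g i' → False := by
    intro i hi i' hi' hii' hxi hxi'
    obtain ⟨y, hy, hyt, hyx⟩ := hcoll i hi i' hi' hii' x hxi hxi' hxn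
    have hyB : y ∉ B := fun hyB => (hmin y (mem_filter.2 ⟨hyB, i', hi', hy⟩)).not_gt hyx
    obtain ⟨hiB, hix⟩ := mem_cyclicBlock_of_notMem_of_lt hc htn hxB hyB hyx (hI0 i hi) hyt
    exact (hmin i (mem_filter.2 ⟨hiB, i, hi, hself i hi⟩)).not_gt hix
  have hunique : #{i ∈ I | x ∈ g i} = 1 := by
    refine card_eq_one.2 ⟨i₀, eq_singleton_iff_unique_mem.2 ⟨mem_filter.2 ⟨hi₀, hxi₀⟩, ?_⟩⟩
    intro i hi
    obtain ⟨hiI, hxi⟩ := mem_filter.1 hi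
    rcases lt_trichotomy i i₀ with h | h | h
    exacts [(hcovered i hiI i₀ hi₀ h hxi hxi₀).elim, h, (hcovered i₀ hi₀ i hiI h hxi₀ hxi).elim]
  exact ⟨x, mem_inter.2 ⟨(mem_symmDiffs I g x).2 (hunique ▸ odd_one), hxB⟩⟩

lemma Nat.exists_eq_add_mul_of_mod_eq {u s r : ℕ} (hsr : s ≤ r) (hu : 0 < u)
    (h : u % r = s % r) : ∃ m, u = s + m * r := by
  have hsu : s ≤ u := by
    by_contra! hus
    rw [Nat.mod_eq_of_lt (hus.trans_le hsr)] at h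
    rcases hsr.lt_or_eq with hsr | rfl
    · rw [Nat.mod_eq_of_lt hsr] at h
      omega
    · rw [Nat.mod_self] at h
      omega
  obtain ⟨m, hm⟩ := (Nat.modEq_iff_dvd' hsu).1 h.symm
  exact ⟨m, by rw [mul_comm]; omega⟩

lemma Nat.add_le_of_add_mul_eq {a b r m m' : ℕ} (h : a + m * r = b + m' * r) (hab : a < b) :
    a + r ≤ b := by
  have hm : m' + 1 ≤ m := by
    by_contra! hm
    have := Nat.mul_le_mul_right r (Nat.le_of_lt_succ hm)
    omega
  have := Nat.mul_le_mul_right r hm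
  rw [add_one_mul] at this
  omega

/-- The remainders and quotients of the Euclidean algorithm on `(n, t)`; `ρ (j + 1)` is the
paper's `r_j`. -/
structure EuclidChain where
  n : ℕ
  t : ℕ
  k : ℕ
  q : ℕ → ℕ
  ρ : ℕ → ℕ
  ρ_zero : ρ 0 = n
  ρ_one : ρ 1 = t
  ρ_sub_one : ∀ i, 1 ≤ i → i ≤ k → ρ (i - 1) = q i * ρ i + ρ (i + 1)
  ρ_succ_k : ρ (k + 1) = 0
  ρ_pos : ∀ i, 1 ≤ i → i ≤ k → 0 < ρ i
  q_pos : ∀ i, 1 ≤ i → i ≤ k → 0 < q i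
  one_le_k : 1 ≤ k

namespace EuclidChain

variable (E : EuclidChain)

/-- `N m = n_m` and `T m = t_m` of the paper. -/
def N (m : ℕ) : ℕ := ∑ j ∈ Icc 1 m, E.q (2 * j - 1) * E.ρ (2 * j - 1)

def T (m : ℕ) : ℕ := ∑ j ∈ Icc 1 m, E.q (2 * j) * E.ρ (2 * j)

lemma ρ_eq_q_mul_add (j : ℕ) (hj : j < E.k) : E.ρ j = E.q (j + 1) * E.ρ (j + 1) + E.ρ (j + 2) :=
  E.ρ_sub_one (j + 1) (by omega) hj

@[simp] lemma N_zero : E.N 0 = 0 := by simp [N]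

@[simp] lemma T_zero : E.T 0 = 0 := by simp [T]

lemma N_succ (j : ℕ) : E.N (j + 1) = E.N j + E.q (2 * j + 1) * E.ρ (2 * j + 1) := by
  rw [N, N, sum_Icc_succ_top (by omega), show 2 * (j + 1) - 1 = 2 * j + 1 by omega]

lemma T_succ (j : ℕ) : E.T (j + 1) = E.T j + E.q (2 * j + 2) * E.ρ (2 * j + 2) := by
  rw [T, T, sum_Icc_succ_top (by omega), show 2 * (j + 1) = 2 * j + 2 by omega]

lemma N_mono : Monotone E.N :=
  monotone_nat_of_le_succ fun j => by rw [N_succ]; omega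

lemma T_mono : Monotone E.T :=
  monotone_nat_of_le_succ fun j => by rw [T_succ]; omega

lemma N_succ_add_ρ {m : ℕ} (hm : 2 * m + 1 ≤ E.k) : E.N (m + 1) + E.ρ (2 * m + 2) = E.n := by
  induction m with
  | zero => simpa [N_succ, ← E.ρ_zero] using (E.ρ_eq_q_mul_add 0 (by omega)).symm
  | succ m ih =>
    have h := E.ρ_eq_q_mul_add (2 * m + 2) (by omega)
    rw [N_succ, ← ih (by omega), h]
    ring_nf

lemma T_add_ρ {m : ℕ} (hm : 2 * m ≤ E.k) : E.T m + E.ρ (2 * m + 1) = E.t := by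
  induction m with
  | zero => simpa using E.ρ_one
  | succ m ih =>
    have h := E.ρ_eq_q_mul_add (2 * m + 1) (by omega)
    rw [T_succ, ← ih (by omega), h]
    ring_nf

lemma t_le_N_succ (j : ℕ) : E.t ≤ E.N (j + 1) := by
  have h1 : E.N 1 = E.q 1 * E.t := by simp [N_succ, E.ρ_one]
  have hq := E.q_pos 1 le_rfl E.one_le_k
  calc E.t ≤ E.q 1 * E.t := Nat.le_mul_of_pos_left _ hq
    _ = E.N 1 := h1.symm
    _ ≤ E.N (j + 1) := E.N_mono (by omega)

lemma two_mul_add_one_le_k {j : ℕ} (hT : E.T j < E.t) (hN : E.N j < E.n) :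
    2 * j + 1 ≤ E.k := by
  by_contra! hj
  obtain ⟨m, hm | hm⟩ := Nat.even_or_odd' E.k
  · have h := E.T_add_ρ (m := m) (by omega)
    rw [show 2 * m + 1 = E.k + 1 by omega, E.ρ_succ_k] at h
    have := E.T_mono (show m ≤ j by omega)
    omega
  · have h := E.N_succ_add_ρ (m := m) (by omega)
    rw [show 2 * m + 2 = E.k + 1 by omega, E.ρ_succ_k] at h
    have := E.N_mono (show m + 1 ≤ j by omega)
    omega

lemma t_le_n : E.t ≤ E.n := by
  have := E.t_le_N_succ 0
  have := E.N_succ_add_ρ (m := 0) E.one_le_k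
  omega

/-- The piece `g_i^{(j)}` of the paper. -/
def block (i j : ℕ) : Finset ℕ :=
  (Ioc (E.N j) (E.N (j + 1))).filter fun x =>
    (x - E.N j) % E.ρ (2 * j + 1) = (i - E.T j) % E.ρ (2 * j + 1)

/-- The point of `g_i^{(a+1)}`. -/
def extra (i a : ℕ) : ℕ := E.N (a + 1) + lpr (i - E.T a) (E.ρ (2 * a + 2))

/-- The generator `g_i`, where `a` is the largest index with `t_a < i`. -/
def gen (i a : ℕ) : Finset ℕ :=
  (range (a + 1)).biUnion (E.block i) ∪ if E.k = 2 * a + 1 then ∅ else {E.extra i a}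

variable {E} {i a j x : ℕ}

lemma T_lt_of_le (ha : IsGreatest {m | E.T m < i} a) (hja : j ≤ a) : E.T j < i :=
  (E.T_mono hja).trans_lt ha.1

lemma le_of_isGreatest_of_lt {i' a' : ℕ} (hii' : i < i') (ha : IsGreatest {m | E.T m < i} a)
    (ha' : IsGreatest {m | E.T m < i'} a') : a ≤ a' :=
  ha'.2 (ha.1.trans hii' : E.T a < i')

lemma le_T_succ (ha : IsGreatest {m | E.T m < i} a) : i ≤ E.T (a + 1) := by
  by_contra! h
  exact absurd (ha.2 h) (by omega)

lemma mem_block (hj : 2 * j + 1 ≤ E.k) (hij : E.T j < i) (hit : i ≤ E.t) :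
    x ∈ E.block i j ↔
      E.N j < x ∧ x ≤ E.N (j + 1) ∧ ∃ m, x = E.N j + (i - E.T j) + m * E.ρ (2 * j + 1) := by
  have hρ := E.T_add_ρ (m := j) (by omega)
  simp only [block, mem_filter, mem_Ioc]
  constructor
  · rintro ⟨⟨hx, hx'⟩, h⟩
    obtain ⟨m, hm⟩ := Nat.exists_eq_add_mul_of_mod_eq (by omega) (by omega) h
    exact ⟨hx, hx', m, by omega⟩
  · rintro ⟨hx, hx', m, rfl⟩
    refine ⟨⟨hx, hx'⟩, ?_⟩
    rw [show E.N j + (i - E.T j) + m * E.ρ (2 * j + 1) - E.N j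
      = i - E.T j + m * E.ρ (2 * j + 1) by omega, Nat.add_mul_mod_self_right]

lemma mem_gen_of_mem_block (hja : j ≤ a) (hx : x ∈ E.block i j) : x ∈ E.gen i a :=
  mem_union_left _ (mem_biUnion.2 ⟨j, mem_range.2 (by omega), hx⟩)

lemma extra_mem_gen (hk : 2 * a + 2 ≤ E.k) : E.extra i a ∈ E.gen i a :=
  mem_union_right _ (by rw [if_neg (by omega)]; exact mem_singleton_self _)

/-- The pieces indexed beyond the chain, where `ρ` is unconstrained, lie above `n`. -/
lemma mem_gen_cases (hit : i ≤ E.t) (ha : IsGreatest {m | E.T m < i} a) (hx : x ∈ E.gen i a)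
    (hxn : x ≤ E.n) :
    (∃ j ≤ a, 2 * j + 1 ≤ E.k ∧ x ∈ E.block i j) ∨ (2 * a + 2 ≤ E.k ∧ x = E.extra i a) := by
  rcases mem_union.1 hx with hx | hx
  · obtain ⟨j, hj, hxj⟩ := mem_biUnion.1 hx
    have hja : j ≤ a := by simpa [Nat.lt_succ_iff] using hj
    have hNx := (mem_Ioc.1 (mem_filter.1 hxj).1).1
    have := T_lt_of_le ha hja
    exact Or.inl ⟨j, hja, E.two_mul_add_one_le_k (by omega) (by omega), hxj⟩
  · split_ifs at hx with hk
    · simp at hx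
    rw [mem_singleton] at hx
    have hTa : E.T a < i := ha.1
    have hL := lpr_pos (E.ρ (2 * a + 2)) (show 0 < i - E.T a by omega)
    have hNa := E.N_mono (show a ≤ a + 1 by omega)
    have h := E.two_mul_add_one_le_k (j := a) (by omega) (by rw [hx, extra] at hxn; omega)
    exact Or.inr ⟨by omega, hx⟩

lemma mem_gen_self (hit : i ≤ E.t) (ha : IsGreatest {m | E.T m < i} a) : i ∈ E.gen i a := by
  have hi : 0 < i := (Nat.zero_le _).trans_lt ha.1
  have := E.t_le_N_succ 0
  refine mem_gen_of_mem_block (Nat.zero_le a) ((mem_block E.one_le_k (by simpa) hit).2 ?_)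
  exact ⟨by simpa, by omega, 0, by simp⟩

/-- `n_{j+1} + i - t` is the largest point of the piece `g_i^{(j)}`. -/
lemma N_succ_add_sub_mem_gen (hit : i ≤ E.t) (ha : IsGreatest {m | E.T m < i} a) (hja : j ≤ a)
    (hj : 2 * j + 1 ≤ E.k) : E.N (j + 1) + i - E.t ∈ E.gen i a := by
  have hij := T_lt_of_le ha hja
  refine mem_gen_of_mem_block hja ((mem_block hj hij hit).2 ?_)
  obtain ⟨q', hq'⟩ : ∃ q', E.q (2 * j + 1) = q' + 1 :=
    Nat.exists_eq_add_one.2 (E.q_pos _ (by omega) hj)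
  have hN := E.N_succ j
  have hρ := E.T_add_ρ (m := j) (by omega)
  rw [hq', add_one_mul] at hN
  exact ⟨by omega, by omega, q', by omega⟩

/-- Inside a piece this is periodicity; at the left end of a piece the predecessor is the last
point of the previous piece, at distance `t - t_j = ρ (2j+1)`. -/
lemma exists_add_ρ_eq_of_mem_block (hit : i ≤ E.t) (ha : IsGreatest {m | E.T m < i} a)
    (hja : j ≤ a) (hj : 2 * j + 1 ≤ E.k) (hx : x ∈ E.block i j) (hxi : x ≠ i) :
    ∃ p ∈ E.gen i a, p + E.ρ (2 * j + 1) = x := by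
  have hij := T_lt_of_le ha hja
  have hρ := E.T_add_ρ (m := j) (by omega)
  obtain ⟨hNx, hxN, m, rfl⟩ := (mem_block hj hij hit).1 hx
  rcases m with _ | m
  · rcases j with _ | j
    · simp at hxi
    refine ⟨E.N (j + 1) + i - E.t, N_succ_add_sub_mem_gen hit ha (by omega) (by omega), ?_⟩
    have := E.t_le_N_succ j
    omega
  · refine ⟨E.N j + (i - E.T j) + m * E.ρ (2 * j + 1), ?_, by rw [add_one_mul]; ring⟩
    refine mem_gen_of_mem_block hja ((mem_block hj hij hit).2 ⟨by omega, ?_, m, rfl⟩)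
    rw [add_one_mul] at hxN
    omega

lemma N_succ_lt_extra (ha : IsGreatest {m | E.T m < i} a) : E.N (a + 1) < E.extra i a := by
  have := lpr_pos (E.ρ (2 * a + 2)) (show 0 < i - E.T a by have : E.T a < i := ha.1; omega)
  rw [extra]
  omega

lemma extra_le_N_succ_add (ha : IsGreatest {m | E.T m < i} a) :
    E.extra i a ≤ E.N (a + 1) + i := by
  have := lpr_le (E.ρ (2 * a + 2)) (show 0 < i - E.T a by have : E.T a < i := ha.1; omega)
  rw [extra]
  omega

lemma extra_le_n (hk : 2 * a + 2 ≤ E.k) : E.extra i a ≤ E.n := by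
  have := lpr_le_right (i - E.T a) (E.ρ_pos (2 * a + 2) (by omega) hk)
  have := E.N_succ_add_ρ (m := a) (by omega)
  rw [extra]
  omega

/-- The distance `n - extra` brings `i` up to the next multiple of `ρ (2a+2)` above `t_a`,
which is at most `t_{a+1}`. -/
lemma exists_add_n_eq_extra_add (ha : IsGreatest {m | E.T m < i} a)
    (hk : 2 * a + 2 ≤ E.k) :
    ∃ m, m + 1 ≤ E.q (2 * a + 2) ∧
      i + E.n = E.extra i a + E.T a + m * E.ρ (2 * a + 2) + E.ρ (2 * a + 2) := by
  have hTa : E.T a < i := ha.1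
  have hρ := E.ρ_pos (2 * a + 2) (by omega) hk
  obtain ⟨m, hm⟩ := exists_eq_lpr_add_mul (E.ρ (2 * a + 2)) (show 0 < i - E.T a by omega)
  have hL := lpr_pos (E.ρ (2 * a + 2)) (show 0 < i - E.T a by omega)
  have hN := E.N_succ_add_ρ (m := a) (by omega)
  have hT := E.T_succ a
  have hiT := le_T_succ ha
  refine ⟨m, ?_, by rw [extra]; omega⟩
  exact Nat.lt_of_mul_lt_mul_right (a := E.ρ (2 * a + 2)) (by omega)

lemma add_n_le_extra_add_T_succ (ha : IsGreatest {m | E.T m < i} a)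
    (hk : 2 * a + 2 ≤ E.k) : i + E.n ≤ E.extra i a + E.T (a + 1) := by
  obtain ⟨m, hmq, hm⟩ := exists_add_n_eq_extra_add ha hk
  have := Nat.mul_le_mul_right (E.ρ (2 * a + 2)) hmq
  rw [add_one_mul] at this
  rw [E.T_succ]
  omega

lemma exists_mem_gen_top (hit : i ≤ E.t) (ha : IsGreatest {m | E.T m < i} a) :
    ∃ y ∈ E.gen i a, y ≤ E.n ∧ E.n + i ≤ y + E.t := by
  by_cases hk : 2 * a + 2 ≤ E.k
  · have := add_n_le_extra_add_T_succ ha hk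
    have := E.T_add_ρ (m := a + 1) (by omega)
    exact ⟨_, extra_mem_gen hk, extra_le_n hk, by omega⟩
  -- otherwise `k = 2w + 1` is odd with `w ≤ a`, and the last piece ends at `n_{w+1} = n`
  obtain ⟨w, hw, hwa⟩ : ∃ w, E.k = 2 * w + 1 ∧ w ≤ a := by
    obtain ⟨w, hw | hw⟩ := Nat.even_or_odd' E.k
    · have h := E.T_add_ρ (m := w) (by omega)
      rw [show 2 * w + 1 = E.k + 1 by omega, E.ρ_succ_k] at h
      have : a < w := by
        by_contra! hwa
        have : E.T w < i := (E.T_mono hwa).trans_lt ha.1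
        omega
      omega
    · exact ⟨w, hw, by omega⟩
  have h := E.N_succ_add_ρ (m := w) (by omega)
  rw [show 2 * w + 2 = E.k + 1 by omega, E.ρ_succ_k] at h
  exact ⟨_, N_succ_add_sub_mem_gen hit ha hwa (by omega), by omega, by omega⟩

lemma exists_mem_gen_gap (hit : i ≤ E.t) (ha : IsGreatest {m | E.T m < i} a) {y : ℕ}
    (hy : y ∈ E.gen i a) (hyn : y ≤ E.n) (hty : E.t < y) :
    ∃ p ∈ E.gen i a, p < y ∧ y ≤ p + E.t := by
  rcases mem_gen_cases hit ha hy hyn with ⟨j, hja, hj, hyj⟩ | ⟨hk, rfl⟩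
  · obtain ⟨p, hp, hpy⟩ := exists_add_ρ_eq_of_mem_block hit ha hja hj hyj (by omega)
    have := E.T_add_ρ (m := j) (by omega)
    have := E.ρ_pos (2 * j + 1) (by omega) hj
    exact ⟨p, hp, by omega, by omega⟩
  · have := N_succ_lt_extra ha
    have := extra_le_N_succ_add ha
    have := E.t_le_N_succ a
    exact ⟨_, N_succ_add_sub_mem_gen hit ha le_rfl (by omega), by omega, by omega⟩

lemma gen_inter_cyclicBlock_nonempty (hit : i ≤ E.t) (ha : IsGreatest {m | E.T m < i} a)
    {c : ℕ} (hc : c < E.n) : (E.gen i a ∩ cyclicBlock E.n E.t c).Nonempty :=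
  inter_cyclicBlock_nonempty hc E.t_le_n (mem_gen_self hit ha) ((Nat.zero_le _).trans_lt ha.1)
    (exists_mem_gen_top hit ha) fun _ hy => exists_mem_gen_gap hit ha hy

lemma eq_of_mem_block_of_mem_block {i' j' : ℕ} (hj : 2 * j + 1 ≤ E.k) (hij : E.T j < i)
    (hit : i ≤ E.t) (hj' : 2 * j' + 1 ≤ E.k) (hij' : E.T j' < i') (hi't : i' ≤ E.t)
    (hx : x ∈ E.block i j) (hx' : x ∈ E.block i' j') : i = i' := by
  obtain ⟨hNx, hxN, m, hm⟩ := (mem_block hj hij hit).1 hx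
  obtain ⟨hNx', hxN', m', hm'⟩ := (mem_block hj' hij' hi't).1 hx'
  obtain rfl : j = j' := by
    by_contra hne
    rcases Nat.lt_or_gt_of_ne hne with h | h
    · have := E.N_mono (show j + 1 ≤ j' by omega)
      omega
    · have := E.N_mono (show j' + 1 ≤ j by omega)
      omega
  have hρ := E.T_add_ρ (m := j) (by omega)
  by_contra hne
  rcases Nat.lt_or_gt_of_ne hne with h | h
  · have := Nat.add_le_of_add_mul_eq (a := i - E.T j) (b := i' - E.T j)
      (r := E.ρ (2 * j + 1)) (m := m) (m' := m') (by omega) (by omega)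
    omega
  · have := Nat.add_le_of_add_mul_eq (a := i' - E.T j) (b := i - E.T j)
      (r := E.ρ (2 * j + 1)) (m := m') (m' := m) (by omega) (by omega)
    omega

lemma extra_notMem_block {i' a' : ℕ} (hii' : i < i') (hit : i ≤ E.t)
    (ha : IsGreatest {m | E.T m < i} a) (ha' : IsGreatest {m | E.T m < i'} a') (hja : j ≤ a)
    (hj : 2 * j + 1 ≤ E.k) : E.extra i' a' ∉ E.block i j := by
  intro hx
  have := ((mem_block hj (T_lt_of_le ha hja) hit).1 hx).2.1
  have := E.N_mono (show j + 1 ≤ a' + 1 by have := le_of_isGreatest_of_lt hii' ha ha'; omega)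
  have := N_succ_lt_extra ha'
  omega

lemma exists_mem_gen_lt_of_extra_mem_block {i' a' j' : ℕ} (hi't : i' ≤ E.t)
    (ha : IsGreatest {m | E.T m < i} a) (ha' : IsGreatest {m | E.T m < i'} a')
    (hk : 2 * a + 2 ≤ E.k) (hja' : j' ≤ a') (hj' : 2 * j' + 1 ≤ E.k)
    (hx : E.extra i a ∈ E.block i' j') :
    ∃ y ∈ E.gen i' a', E.n + i ≤ y + E.t ∧ y < E.extra i a := by
  have hxa := N_succ_lt_extra ha
  have hxj' := ((mem_block hj' (T_lt_of_le ha' hja') hi't).1 hx).2.1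
  have hj'a : a < j' := by
    by_contra! h
    have := E.N_mono (show j' + 1 ≤ a + 1 by omega)
    omega
  have := E.t_le_N_succ a
  obtain ⟨p, hp, hpx⟩ := exists_add_ρ_eq_of_mem_block hi't ha' hja' hj' hx (by omega)
  have := add_n_le_extra_add_T_succ ha hk
  have := E.T_mono (show a + 1 ≤ j' by omega)
  have := E.T_add_ρ (m := j') (by omega)
  have := E.ρ_pos (2 * j' + 1) (by omega) hj'
  exact ⟨p, hp, by omega, by omega⟩

lemma add_ρ_le_of_extra_eq_extra {i' a' : ℕ} (hii' : i < i')
    (ha : IsGreatest {m | E.T m < i} a) (ha' : IsGreatest {m | E.T m < i'} a')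
    (hk : 2 * a + 2 ≤ E.k) (hk' : 2 * a' + 2 ≤ E.k) (h : E.extra i a = E.extra i' a') :
    i + E.ρ (2 * a' + 2) ≤ i' := by
  obtain ⟨m', -, hm'⟩ := exists_add_n_eq_extra_add ha' hk'
  rcases (le_of_isGreatest_of_lt hii' ha ha').lt_or_eq with hlt | rfl
  · have := add_n_le_extra_add_T_succ ha hk
    have := E.T_mono (show a + 1 ≤ a' by omega)
    omega
  · obtain ⟨m, -, hm⟩ := exists_add_n_eq_extra_add ha hk
    exact Nat.add_le_of_add_mul_eq (m := m') (m' := m) (by omega) hii'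

lemma exists_mem_gen_lt_of_mem_inter {i' a' : ℕ} (hii' : i < i') (hi't : i' ≤ E.t)
    (ha : IsGreatest {m | E.T m < i} a) (ha' : IsGreatest {m | E.T m < i'} a')
    (hx : x ∈ E.gen i a) (hx' : x ∈ E.gen i' a') (hxn : x ≤ E.n) :
    ∃ y ∈ E.gen i' a', E.n + i ≤ y + E.t ∧ y < x := by
  have hit : i ≤ E.t := by omega
  rcases mem_gen_cases hi't ha' hx' hxn with ⟨j', hja', hj', hxj'⟩ | ⟨hk', rfl⟩ <;>
    rcases mem_gen_cases hit ha hx hxn with ⟨j, hja, hj, hxj⟩ | ⟨hk, hxS⟩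
  · exact absurd (eq_of_mem_block_of_mem_block hj (T_lt_of_le ha hja) hit hj'
      (T_lt_of_le ha' hja') hi't hxj hxj') hii'.ne
  · subst hxS
    exact exists_mem_gen_lt_of_extra_mem_block hi't ha ha' hk hja' hj' hxj'
  · exact absurd hxj (extra_notMem_block hii' hit ha ha' hja hj)
  · have := add_ρ_le_of_extra_eq_extra hii' ha ha' hk hk' hxS.symm
    have := N_succ_lt_extra ha'
    have := E.N_succ_add_ρ (m := a') (by omega)
    have := E.t_le_N_succ a'
    exact ⟨_, N_succ_add_sub_mem_gen hi't ha' le_rfl (by omega), by omega, by omega⟩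

end EuclidChain

theorem stmt16_general (n t k : ℕ) (htn : t ≤ n) (hk : 1 ≤ k)
    (q ρ : ℕ → ℕ) (hρ0 : ρ 0 = n) (hρ1 : ρ 1 = t)
    (hrec : ∀ i, 1 ≤ i → i ≤ k → ρ (i - 1) = q i * ρ i + ρ (i + 1))
    (hzero : ρ (k + 1) = 0)
    (hpos : ∀ i, 1 ≤ i → i ≤ k → 0 < ρ i)
    (hq : ∀ i, 1 ≤ i → i ≤ k → 0 < q i)
    (nP tP : ℕ → ℕ)
    (hnP : ∀ m, nP m = ∑ j ∈ Finset.Icc 1 m, q (2 * j - 1) * ρ (2 * j - 1))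
    (htP : ∀ m, tP m = ∑ j ∈ Finset.Icc 1 m, q (2 * j) * ρ (2 * j))
    (aval : ℕ → ℕ)
    (haval : ∀ i, 1 ≤ i → i ≤ t →
      tP (aval i) < i ∧ ∀ m, tP m < i → m ≤ aval i)
    (g : ℕ → Finset ℕ)
    (hg : ∀ i, 1 ≤ i → i ≤ t → g i =
      ((Finset.range (aval i + 1)).biUnion fun j =>
        (Finset.Ioc (nP j) (nP (j + 1))).filter fun x =>
          (x - nP j) % ρ (2 * j + 1) = (i - tP j) % ρ (2 * j + 1)) ∪
      (if k = 2 * aval i + 1 then ∅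
        else {nP (aval i + 1) + lpr (i - tP (aval i)) (ρ (2 * aval i + 2))})) :
    ∀ I ⊆ Finset.Icc 1 t, symmDiffs I g ≠ ∅ →
      ∀ c < n, (symmDiffs I g ∩ cyclicBlock n t c).Nonempty := by
  intro I hI hne c hc
  let E : EuclidChain := ⟨n, t, k, q, ρ, hρ0, hρ1, hrec, hzero, hpos, hq, hk⟩
  obtain rfl : nP = E.N := funext hnP
  obtain rfl : tP = E.T := funext htP
  have hIt : ∀ i ∈ I, 1 ≤ i ∧ i ≤ t := fun i hi => mem_Icc.1 (hI hi)
  have hlevel : ∀ i ∈ I, IsGreatest {m | E.T m < i} (aval i) :=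
    fun i hi => haval i (hIt i hi).1 (hIt i hi).2
  have hgen : ∀ i ∈ I, g i = E.gen i (aval i) := fun i hi => hg i (hIt i hi).1 (hIt i hi).2
  refine symmDiffs_inter_cyclicBlock_nonempty hc htn
    (nonempty_iff_ne_empty.2 fun h => hne (by rw [h]; rfl)) (fun i hi => (hIt i hi).1)
    (fun i hi => ?_) (fun i hi => ?_) (fun i hi i' hi' hii' x hxi hxi' hxn => ?_)
  · rw [hgen i hi]
    exact EuclidChain.mem_gen_self (hIt i hi).2 (hlevel i hi)
  · rw [hgen i hi]
    exact EuclidChain.gen_inter_cyclicBlock_nonempty (hIt i hi).2 (hlevel i hi) hc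
  · rw [hgen i hi] at hxi
    rw [hgen i' hi'] at hxi' ⊢
    exact EuclidChain.exists_mem_gen_lt_of_mem_inter hii' (hIt i' hi').2 (hlevel i hi)
      (hlevel i' hi') hxi hxi' hxn

theorem stmt16 (n t k : ℕ) (ht : 0 < t) (htn : t ≤ n) (hk : 1 ≤ k)
    (q ρ : ℕ → ℕ) (hρ0 : ρ 0 = n) (hρ1 : ρ 1 = t)
    (hrec : ∀ i, 1 ≤ i → i ≤ k → ρ (i - 1) = q i * ρ i + ρ (i + 1))
    (hzero : ρ (k + 1) = 0)
    (hpos : ∀ i, 1 ≤ i → i ≤ k → 0 < ρ i)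
    (hdec : ∀ i, 2 ≤ i → i ≤ k → ρ i < ρ (i - 1))
    (hq : ∀ i, 1 ≤ i → i ≤ k → 0 < q i)
    (nP tP : ℕ → ℕ)
    (hnP : ∀ m, nP m = ∑ j ∈ Finset.Icc 1 m, q (2 * j - 1) * ρ (2 * j - 1))
    (htP : ∀ m, tP m = ∑ j ∈ Finset.Icc 1 m, q (2 * j) * ρ (2 * j))
    (aval : ℕ → ℕ)
    (haval : ∀ i, 1 ≤ i → i ≤ t →
      tP (aval i) < i ∧ ∀ m, tP m < i → m ≤ aval i)
    (g : ℕ → Finset ℕ)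
    (hg : ∀ i, 1 ≤ i → i ≤ t → g i =
      ((Finset.range (aval i + 1)).biUnion fun j =>
        (Finset.Ioc (nP j) (nP (j + 1))).filter fun x =>
          (x - nP j) % ρ (2 * j + 1) = (i - tP j) % ρ (2 * j + 1)) ∪
      (if k = 2 * aval i + 1 then ∅
        else {nP (aval i + 1) + lpr (i - tP (aval i)) (ρ (2 * aval i + 2))})) :
    ∀ I ⊆ Finset.Icc 1 t, symmDiffs I g ≠ ∅ →
      ∀ c < n, (symmDiffs I g ∩ cyclicBlock n t c).Nonempty :=
  stmt16_general n t k htn hk q ρ hρ0 hρ1 hrec hzero hpos hq nP tP hnP htP aval haval g hg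
end
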